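/- Let (K_{i(e)}, w_e, p_e)_{e∈E} be a contractive Markov system with average contracting rate 0 < a < 1 such that each p_e restricted to K_{i(e)} is Dini-continuous and p_e ≥ δ > 0 on K_{i(e)} for all e ∈ E. Then for every path (e_1,…,e_n) of the directed multigraph (i.e. t(e_k) = i(e_{k+1}) for 1 ≤ k < n), the function p(x) := p_{e_1}(x) · p_{e_2}(w_{e_1}x) ⋯ p_{e_n}(w_{e_{n−1}} ∘ ⋯ ∘ w_{e_1}x), restricted to K_{i(e_1)}, is bounded and Dini-continuous. -/

import Mathlib

open MeasureTheory Filter ENNReal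

/-- The modulus of uniform continuity of a real-valued function on a
(pseudo)metric space, valued in `ℝ≥0∞`. -/
noncomputable def modulus {X : Type*} [PseudoMetricSpace X] (h : X → ℝ) (t : ℝ) : ℝ≥0∞ :=
  ⨆ (x : X) (y : X) (_ : dist x y ≤ t), ENNReal.ofReal |h x - h y|

/-- A function is Dini-continuous if `∫_0^c φ(t)/t dt < ∞` for some `c > 0`,
where `φ` is its modulus of uniform continuity. -/
def DiniContinuous {X : Type*} [PseudoMetricSpace X] (h : X → ℝ) : Prop :=
  ∃ c > (0 : ℝ), ∫⁻ t in Set.Ioc (0 : ℝ) c, modulus h t / ENNReal.ofReal t < ⊤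

/-- A Markov system on a metric space `K`, with vertex set `Fin N` and edge set `E`. -/
structure MarkovSystem (K : Type*) [MetricSpace K] [MeasurableSpace K]
    (N : ℕ) (E : Type*) [Fintype E] where
  /-- initial vertex of an edge -/
  edgeI : E → Fin N
  /-- terminal vertex of an edge -/
  edgeT : E → Fin N
  /-- the partition `K_1, …, K_N` of `K` -/
  Ki : Fin N → Set K
  Ki_nonempty : ∀ v, (Ki v).Nonempty
  Ki_measurable : ∀ v, MeasurableSet (Ki v)
  Ki_disjoint : ∀ v v', v ≠ v' → Disjoint (Ki v) (Ki v')
  Ki_cover : ∀ x : K, ∃ v, x ∈ Ki v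
  /-- the maps `w_e` -/
  w : E → K → K
  w_measurable : ∀ e, Measurable (w e)
  w_mapsTo : ∀ e, Set.MapsTo (w e) (Ki (edgeI e)) (Ki (edgeT e))
  /-- the probability functions `p_e` -/
  p : E → K → ℝ
  p_measurable : ∀ e, Measurable (p e)
  p_nonneg : ∀ e x, 0 ≤ p e x
  p_sum_one : ∀ x : K, ∑ e, p e x = 1
  p_eq_zero : ∀ e, ∀ x : K, x ∉ Ki (edgeI e) → p e x = 0

namespace MarkovSystem

variable {K : Type*} [MetricSpace K] [MeasurableSpace K] {N : ℕ} {E : Type*} [Fintype E]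

/-- Condition of contractiveness on average with rate `a`. -/
def ContractiveOnAvg (sys : MarkovSystem K N E) (a : ℝ) : Prop :=
  ∀ v : Fin N, ∀ x ∈ sys.Ki v, ∀ y ∈ sys.Ki v,
    ∑ e, sys.p e x * dist (sys.w e x) (sys.w e y) ≤ a * dist x y

/-- `μ` is an invariant Borel probability measure of the Markov system:
`∫ Uf dμ = ∫ f dμ` for every bounded Borel measurable `f`. -/
def IsInvariant (sys : MarkovSystem K N E) (μ : Measure K) : Prop :=
  IsProbabilityMeasure μ ∧
  ∀ f : K → ℝ, Measurable f → (∃ B, ∀ x, |f x| ≤ B) →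
    ∫ x, (∑ e, sys.p e x * f (sys.w e x)) ∂μ = ∫ x, f x ∂μ

end MarkovSystem

/-- `wordProb w p (e₁ :: … :: eₖ) x = p_{e₁}(x) p_{e₂}(w_{e₁}x) ⋯ p_{eₖ}(w_{e_{k-1}} ∘ ⋯ ∘ w_{e₁}x)`. -/
def wordProb {K E : Type*} (w : E → K → K) (p : E → K → ℝ) : List E → K → ℝ
  | [], _ => 1
  | e :: l, x => p e x * wordProb w p l (w e x)

/-- `wordMap w (e₁ :: … :: eₖ) = w_{eₖ} ∘ ⋯ ∘ w_{e₁}`. -/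
def wordMap {K E : Type*} (w : E → K → K) : List E → K → K
  | [], x => x
  | e :: l, x => wordMap w l (w e x)

/-- `M` is the generalized Markov measure on `Σ = E^ℤ` associated with the Markov
system and the invariant measure `μ`. -/
def IsMarkovMeasure {K : Type*} [MetricSpace K] [MeasurableSpace K] {N : ℕ}
    {E : Type*} [Fintype E] [MeasurableSpace E]
    (sys : MarkovSystem K N E) (μ : Measure K) (M : Measure (ℤ → E)) : Prop :=
  IsProbabilityMeasure M ∧
  ∀ (m : ℤ) (es : List E),
    M {σ : ℤ → E | ∀ j : Fin es.length, σ (m + (j : ℕ)) = es.get j}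
      = ENNReal.ofReal (∫ x, wordProb sys.w sys.p es x ∂μ)

/-- The left shift on `E^ℤ`. -/
def shift {E : Type*} (σ : ℤ → E) : ℤ → E := fun k => σ (k + 1)

/-- `comps w σ m = w_{σ₀} ∘ w_{σ₋₁} ∘ ⋯ ∘ w_{σ₋ₘ}`. -/
def comps {K E : Type*} (w : E → K → K) (σ : ℤ → E) : ℕ → K → K
  | 0 => w (σ 0)
  | n + 1 => fun x => comps w σ n (w (σ (-((n : ℤ) + 1))) x)

/-- `F` is the coding map of the contractive Markov system:
`F(σ) = lim_{m → -∞} w_{σ₀} ∘ ⋯ ∘ w_{σₘ} x_{i(σₘ)}` for `M`-a.e. `σ`. -/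
def IsCodingMap {K : Type*} [MetricSpace K] [MeasurableSpace K] {N : ℕ}
    {E : Type*} [Fintype E] [MeasurableSpace E]
    (sys : MarkovSystem K N E) (M : Measure (ℤ → E)) (F : (ℤ → E) → K) : Prop :=
  Measurable F ∧ ∃ xs : Fin N → K, (∀ v, xs v ∈ sys.Ki v) ∧
    ∀ᵐ σ ∂M, Filter.Tendsto
      (fun m : ℕ => comps sys.w σ m (xs (sys.edgeI (σ (-(m : ℤ))))))
      Filter.atTop (nhds (F σ))

/-- Entropy of the finite measurable partition given by the fibers of `π`. -/
noncomputable def partEntropy {Ω : Type*} [MeasurableSpace Ω] (M : Measure Ω)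
    {F : Type*} [Fintype F] (π : Ω → F) : ℝ :=
  -∑ f : F, ((M (π ⁻¹' {f})).toReal * Real.log (M (π ⁻¹' {f})).toReal)

/-- The Kolmogorov–Sinai entropy of a measure-preserving transformation `S`
with respect to `M`: the supremum over all finite measurable partitions `π` of
`inf_n (1/n) H(⋁_{i=0}^{n-1} S^{-i} π)`. -/
noncomputable def ksEntropy {Ω : Type*} [MeasurableSpace Ω] (M : Measure Ω) (S : Ω → Ω) : ℝ≥0∞ :=
  ⨆ (k : ℕ) (π : Ω → Fin k) (_ : ∀ j, MeasurableSet (π ⁻¹' {j})),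
    ⨅ n : ℕ, ENNReal.ofReal (((n : ℝ) + 1)⁻¹ *
      partEntropy M (fun ω => fun j : Fin (n + 1) => π (S^[(j : ℕ)] ω)))

/-- `IsPath sys l` : the list of edges `l` is a directed path of the multigraph,
i.e. consecutive edges are composable: `t(e_k) = i(e_{k+1})`. -/
def MarkovSystem.IsPath {K : Type*} [MetricSpace K] [MeasurableSpace K]
    {N : ℕ} {E : Type*} [Fintype E] (sys : MarkovSystem K N E) : List E → Prop
  | [] => True
  | [_] => True
  | e :: e' :: l => sys.edgeT e = sys.edgeI e' ∧ MarkovSystem.IsPath sys (e' :: l)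

/-!
Every `w_e` is Lipschitz on `K_{i(e)}` with constant `a / δ`, since
`δ · d(w_e x, w_e y) ≤ p_e(x) d(w_e x, w_e y) ≤ a d(x, y)`. Dini continuity survives
precomposition with a Lipschitz map (rescale the variable of the Dini integral) and products
of bounded functions (the modulus of `f g` is at most `sup |g| · φ_f + sup |f| · φ_g`), so
`p_{e₁} · (p_{e₂ ⋯ eₙ} ∘ w_{e₁})` is Dini-continuous by induction along the path.
All these functions take values in `[0, 1]`.
-/

section Modulus

variable {X Y : Type*} [PseudoMetricSpace X] [PseudoMetricSpace Y]

lemma ofReal_abs_sub_le_modulus {h : X → ℝ} {x y : X} {t : ℝ} (hd : dist x y ≤ t) :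
    ENNReal.ofReal |h x - h y| ≤ modulus h t :=
  le_iSup_of_le x <| le_iSup_of_le y <| le_iSup_of_le hd le_rfl

lemma modulus_le {h : X → ℝ} {t : ℝ} {M : ℝ≥0∞}
    (H : ∀ x y : X, dist x y ≤ t → ENNReal.ofReal |h x - h y| ≤ M) : modulus h t ≤ M :=
  iSup_le fun x => iSup_le fun y => iSup_le fun hd => H x y hd

lemma monotone_modulus (h : X → ℝ) : Monotone (modulus h) := fun _ _ hst =>
  modulus_le fun _ _ hd => ofReal_abs_sub_le_modulus (hd.trans hst)

lemma measurable_modulus (h : X → ℝ) : Measurable (modulus h) :=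
  (monotone_modulus h).measurable

lemma modulus_mul_le {f g : X → ℝ} {A B : ℝ} (hf : ∀ x, |f x| ≤ A) (hg : ∀ x, |g x| ≤ B)
    (t : ℝ) :
    modulus (fun x => f x * g x) t
      ≤ ENNReal.ofReal B * modulus f t + ENNReal.ofReal A * modulus g t := by
  refine modulus_le fun x y hd => ?_
  have hreal : |f x * g x - f y * g y| ≤ B * |f x - f y| + A * |g x - g y| :=
    calc |f x * g x - f y * g y| = |(f x - f y) * g x + f y * (g x - g y)| := by ring_nf
      _ ≤ |f x - f y| * |g x| + |f y| * |g x - g y| := by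
        simpa only [abs_mul] using abs_add_le ((f x - f y) * g x) (f y * (g x - g y))
      _ ≤ |f x - f y| * B + A * |g x - g y| := by
        gcongr
        exacts [hg x, hf y]
      _ = B * |f x - f y| + A * |g x - g y| := by ring
  calc ENNReal.ofReal |f x * g x - f y * g y|
      ≤ ENNReal.ofReal (B * |f x - f y|) + ENNReal.ofReal (A * |g x - g y|) :=
        (ENNReal.ofReal_le_ofReal hreal).trans ENNReal.ofReal_add_le
    _ ≤ ENNReal.ofReal B * modulus f t + ENNReal.ofReal A * modulus g t := by
        rw [ENNReal.ofReal_mul' (abs_nonneg _), ENNReal.ofReal_mul' (abs_nonneg _)]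
        gcongr <;> exact ofReal_abs_sub_le_modulus hd

lemma DiniContinuous.mul {f g : X → ℝ} {A B : ℝ} (hfA : ∀ x, |f x| ≤ A) (hgB : ∀ x, |g x| ≤ B)
    (hf : DiniContinuous f) (hg : DiniContinuous g) :
    DiniContinuous fun x => f x * g x := by
  obtain ⟨c₁, hc₁, hf⟩ := hf
  obtain ⟨c₂, hc₂, hg⟩ := hg
  set c := min c₁ c₂
  have hdini_le {h : X → ℝ} {c' : ℝ} (hc' : c ≤ c') :
      ∫⁻ t in Set.Ioc 0 c, modulus h t / ENNReal.ofReal t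
        ≤ ∫⁻ t in Set.Ioc 0 c', modulus h t / ENNReal.ofReal t :=
    lintegral_mono_set (Set.Ioc_subset_Ioc_right hc')
  have hmeas (h : X → ℝ) : Measurable fun t => modulus h t / ENNReal.ofReal t :=
    (measurable_modulus h).div ENNReal.measurable_ofReal
  refine ⟨c, lt_min hc₁ hc₂, ?_⟩
  calc ∫⁻ t in Set.Ioc 0 c, modulus (fun x => f x * g x) t / ENNReal.ofReal t
      ≤ ∫⁻ t in Set.Ioc 0 c, (ENNReal.ofReal B * (modulus f t / ENNReal.ofReal t)
          + ENNReal.ofReal A * (modulus g t / ENNReal.ofReal t)) := by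
        refine lintegral_mono fun t => ?_
        simp only [← mul_div_assoc, ← ENNReal.add_div]
        exact ENNReal.div_le_div_right (modulus_mul_le hfA hgB t) _
    _ = ENNReal.ofReal B * (∫⁻ t in Set.Ioc 0 c, modulus f t / ENNReal.ofReal t)
          + ENNReal.ofReal A * ∫⁻ t in Set.Ioc 0 c, modulus g t / ENNReal.ofReal t := by
        rw [lintegral_add_left ((hmeas f).const_mul _), lintegral_const_mul _ (hmeas f),
          lintegral_const_mul _ (hmeas g)]
    _ < ⊤ := by
        have hf' := (hdini_le (min_le_left c₁ c₂)).trans_lt hf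
        have hg' := (hdini_le (min_le_right c₁ c₂)).trans_lt hg
        exact ENNReal.add_lt_top.2 ⟨ENNReal.mul_lt_top ofReal_lt_top hf',
          ENNReal.mul_lt_top ofReal_lt_top hg'⟩

lemma setLIntegral_Ioc_comp_const_mul {g : ℝ → ℝ≥0∞} (hg : Measurable g) {L : ℝ} (hL : 0 < L)
    (c : ℝ) :
    ∫⁻ t in Set.Ioc 0 (c / L), g (L * t) = ENNReal.ofReal |L⁻¹| * ∫⁻ s in Set.Ioc 0 c, g s := by
  have hpre : (fun t => L * t) ⁻¹' Set.Ioc 0 c = Set.Ioc 0 (c / L) := by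
    rw [Set.preimage_const_mul_Ioc₀ _ _ hL, zero_div]
  have hmap := setLIntegral_map (μ := volume) (measurableSet_Ioc (a := 0) (b := c)) hg
    (measurable_const_mul L)
  rwa [Real.map_volume_mul_left hL.ne', setLIntegral_smul_measure, hpre, eq_comm] at hmap

lemma DiniContinuous.comp_lipschitzWith {h : Y → ℝ} {u : X → Y} {L : NNReal}
    (hh : DiniContinuous h) (hu : LipschitzWith L u) : DiniContinuous (h ∘ u) := by
  obtain ⟨c, hc, hint⟩ := hh
  -- `L + 1` rather than `L`, to be able to divide by it
  set L' : ℝ := L + 1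
  have hL' : 0 < L' := by positivity
  have hmod (t : ℝ) : modulus (h ∘ u) t ≤ modulus h (L' * t) := by
    refine modulus_le fun x y hd => ofReal_abs_sub_le_modulus ?_
    calc dist (u x) (u y) ≤ L * dist x y := hu.dist_le_mul x y
      _ ≤ L' * t := by gcongr; linarith
  set g : ℝ → ℝ≥0∞ := fun s => modulus h s / ENNReal.ofReal s
  have hg : Measurable g := (measurable_modulus h).div ENNReal.measurable_ofReal
  have hpoint (t : ℝ) :
      modulus (h ∘ u) t / ENNReal.ofReal t ≤ ENNReal.ofReal L' * g (L' * t) := by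
    calc modulus (h ∘ u) t / ENNReal.ofReal t ≤ modulus h (L' * t) / ENNReal.ofReal t :=
          ENNReal.div_le_div_right (hmod t) _
      _ = ENNReal.ofReal L' * (modulus h (L' * t) / ENNReal.ofReal (L' * t)) := by
          rw [ENNReal.ofReal_mul hL'.le, ← mul_div_assoc,
            ENNReal.mul_div_mul_left _ _ (by simpa using hL') ENNReal.ofReal_ne_top]
  refine ⟨c / L', div_pos hc hL', ?_⟩
  calc ∫⁻ t in Set.Ioc 0 (c / L'), modulus (h ∘ u) t / ENNReal.ofReal t
      ≤ ∫⁻ t in Set.Ioc 0 (c / L'), ENNReal.ofReal L' * g (L' * t) := lintegral_mono hpoint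
    _ = ENNReal.ofReal L' * (ENNReal.ofReal |L'⁻¹| * ∫⁻ s in Set.Ioc 0 c, g s) := by
        rw [lintegral_const_mul' _ _ ofReal_ne_top, setLIntegral_Ioc_comp_const_mul hg hL']
    _ < ⊤ := ENNReal.mul_lt_top ofReal_lt_top (ENNReal.mul_lt_top ofReal_lt_top hint)

end Modulus

section WordProb

variable {K E : Type*} {w : E → K → K} {p : E → K → ℝ}

lemma wordProb_nonneg (hp : ∀ e x, 0 ≤ p e x) : ∀ (l : List E) (x : K), 0 ≤ wordProb w p l x
  | [], _ => zero_le_one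
  | e :: l, x => mul_nonneg (hp e x) (wordProb_nonneg hp l (w e x))

lemma wordProb_le_one (hp : ∀ e x, 0 ≤ p e x) (hp1 : ∀ e x, p e x ≤ 1) :
    ∀ (l : List E) (x : K), wordProb w p l x ≤ 1
  | [], _ => le_rfl
  | e :: l, x =>
    mul_le_one₀ (hp1 e x) (wordProb_nonneg hp l (w e x)) (wordProb_le_one hp hp1 l (w e x))

end WordProb

namespace MarkovSystem

variable {K : Type*} [MetricSpace K] [MeasurableSpace K] {N : ℕ} {E : Type*} [Fintype E]
  (sys : MarkovSystem K N E)

lemma p_le_one (e : E) (x : K) : sys.p e x ≤ 1 :=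
  sys.p_sum_one x ▸ Finset.single_le_sum (fun e' _ => sys.p_nonneg e' x) (Finset.mem_univ e)

lemma abs_wordProb_le_one (l : List E) (x : K) : |wordProb sys.w sys.p l x| ≤ 1 :=
  abs_le.2 ⟨by linarith [wordProb_nonneg sys.p_nonneg l x (w := sys.w)],
    wordProb_le_one sys.p_nonneg sys.p_le_one l x⟩

lemma lipschitzOnWith_w {a δ : ℝ} (hcontr : sys.ContractiveOnAvg a) (hδpos : 0 < δ) {e : E}
    (hδ : ∀ x ∈ sys.Ki (sys.edgeI e), δ ≤ sys.p e x) :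
    LipschitzOnWith (a / δ).toNNReal (sys.w e) (sys.Ki (sys.edgeI e)) := by
  refine LipschitzOnWith.of_dist_le' fun x hx y hy => ?_
  rw [div_mul_eq_mul_div, le_div_iff₀' hδpos]
  calc δ * dist (sys.w e x) (sys.w e y) ≤ sys.p e x * dist (sys.w e x) (sys.w e y) := by
        gcongr; exact hδ x hx
    _ ≤ ∑ e', sys.p e' x * dist (sys.w e' x) (sys.w e' y) :=
        Finset.single_le_sum (f := fun e' => sys.p e' x * dist (sys.w e' x) (sys.w e' y))
          (fun e' _ => mul_nonneg (sys.p_nonneg e' x) dist_nonneg) (Finset.mem_univ e)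
    _ ≤ a * dist x y := hcontr _ x hx y hy

lemma diniContinuous_wordProb_of_isPath {a δ : ℝ} (hcontr : sys.ContractiveOnAvg a)
    (hdini : ∀ e, DiniContinuous fun x : sys.Ki (sys.edgeI e) => sys.p e (x : K))
    (hδpos : 0 < δ) (hδ : ∀ e, ∀ x ∈ sys.Ki (sys.edgeI e), δ ≤ sys.p e x) :
    ∀ (e : E) (l : List E), sys.IsPath (e :: l) →
      DiniContinuous fun x : sys.Ki (sys.edgeI e) => wordProb sys.w sys.p (e :: l) (x : K)
  | e, [], _ => by simpa only [wordProb, mul_one] using hdini e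
  | e, e' :: l, ⟨hee', hpath⟩ => by
    have hmaps : Set.MapsTo (sys.w e) (sys.Ki (sys.edgeI e)) (sys.Ki (sys.edgeI e')) :=
      hee' ▸ sys.w_mapsTo e
    have htail :=
      (diniContinuous_wordProb_of_isPath hcontr hdini hδpos hδ e' l hpath).comp_lipschitzWith
        ((sys.lipschitzOnWith_w hcontr hδpos (hδ e)).mapsToRestrict hmaps)
    exact (hdini e).mul (fun x => abs_of_nonneg (sys.p_nonneg e x) ▸ sys.p_le_one e x)
      (fun _ => sys.abs_wordProb_le_one _ _) htail

end MarkovSystem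

theorem wordProb_bounded_and_diniContinuous_general
    {K : Type*} [MetricSpace K] [MeasurableSpace K]
    {N : ℕ} {E : Type*} [Fintype E]
    (sys : MarkovSystem K N E) (a : ℝ)
    (hcontr : sys.ContractiveOnAvg a)
    (hdini : ∀ e, DiniContinuous fun x : sys.Ki (sys.edgeI e) => sys.p e (x : K))
    (δ : ℝ) (hδpos : 0 < δ)
    (hδ : ∀ e, ∀ x ∈ sys.Ki (sys.edgeI e), δ ≤ sys.p e x)
    (e₁ : E) (rest : List E) (hpath : sys.IsPath (e₁ :: rest)) :
    (∃ B, ∀ x : sys.Ki (sys.edgeI e₁), |wordProb sys.w sys.p (e₁ :: rest) (x : K)| ≤ B) ∧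
    DiniContinuous fun x : sys.Ki (sys.edgeI e₁) => wordProb sys.w sys.p (e₁ :: rest) (x : K)  :=
  ⟨⟨1, fun _ => sys.abs_wordProb_le_one _ _⟩,
    sys.diniContinuous_wordProb_of_isPath hcontr hdini hδpos hδ e₁ rest hpath⟩

/-- Along any directed path `(e₁, …, eₙ)`, the function
`p(x) = p_{e₁}(x) p_{e₂}(w_{e₁}x) ⋯ p_{eₙ}(w_{e_{n-1}} ∘ ⋯ ∘ w_{e₁}x)` restricted to
`K_{i(e₁)}` is bounded and Dini-continuous. -/
theorem wordProb_bounded_and_diniContinuous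
    {K : Type*} [MetricSpace K] [MeasurableSpace K]
    {N : ℕ} {E : Type*} [Fintype E]
    (sys : MarkovSystem K N E) (a : ℝ) (ha0 : 0 < a) (ha1 : a < 1)
    (hcontr : sys.ContractiveOnAvg a)
    (hdini : ∀ e, DiniContinuous fun x : sys.Ki (sys.edgeI e) => sys.p e (x : K))
    (δ : ℝ) (hδpos : 0 < δ)
    (hδ : ∀ e, ∀ x ∈ sys.Ki (sys.edgeI e), δ ≤ sys.p e x)
    (e₁ : E) (rest : List E) (hpath : sys.IsPath (e₁ :: rest)) :
    (∃ B, ∀ x : sys.Ki (sys.edgeI e₁), |wordProb sys.w sys.p (e₁ :: rest) (x : K)| ≤ B) ∧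
    DiniContinuous fun x : sys.Ki (sys.edgeI e₁) => wordProb sys.w sys.p (e₁ :: rest) (x : K) :=
  wordProb_bounded_and_diniContinuous_general sys a hcontr hdini δ hδpos hδ e₁ rest hpath
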